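/- arXiv:2401.16175 — 4 statements merged into one kernel-verified Lean document; each statement's English description precedes it below -/
import Mathlib

section
/- Let N ≥ 0 and let f(z) = ∑_{k=-N}^{N} c_k z^{-k} be a trigonometric polynomial of degree N (so c_{-k} = conj(c_k) for all k, and f is real-valued on the unit circle). Then f(z) ≥ 0 for every z with |z| = 1 if and only if f is a sum of squares, i.e., there exist finitely many complex polynomials h_1, …, h_r, each of degree at most N, such that f(z) = ∑_{j=1}^{r} h_j(z) · conj(h_j(z)) for all z with |z| = 1. -/
open Matrix BigOperators ComplexOrder

/-!
Write the trigonometric polynomial as `f(z) = z⁻ᴺ p(z)` with `deg p ≤ 2N`. Since `f` is real on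
the circle, `p` equals its conjugate reciprocal `z²ᴺ conj (p (1 / conj z))`, so the roots of `p`
come in pairs `α, 1 / conj α`; a root on the circle is double because `f ≥ 0` does not change
sign there. On the circle `(z - α) (z - 1 / conj α) = -(z / conj α) |z - α|²`, so dividing out
such a pair writes `f = |z - α|² g` with `g ≥ 0` of degree `N - 1`, and induction gives
`f = |h|²` for a single polynomial `h` of degree at most `N`.
-/

open Polynomial

lemma ne_zero_of_norm_eq_one {z : ℂ} (hz : ‖z‖ = 1) : z ≠ 0 :=
  norm_ne_zero_iff.mp (hz ▸ one_ne_zero)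

lemma star_eq_inv_of_norm_eq_one {z : ℂ} (hz : ‖z‖ = 1) : star z = z⁻¹ :=
  (Complex.inv_eq_conj hz).symm

noncomputable def cayley (s : ℝ) : ℂ := (1 + s * Complex.I) / (1 - s * Complex.I)

lemma cayley_zero : cayley 0 = 1 := by simp [cayley]

lemma one_sub_mul_I_ne_zero (s : ℝ) : 1 - s * Complex.I ≠ 0 := by
  intro h
  simpa using congrArg Complex.re h

lemma norm_cayley (s : ℝ) : ‖cayley s‖ = 1 := by
  rw [cayley, norm_div, div_eq_one_iff_eq (norm_ne_zero_iff.mpr (one_sub_mul_I_ne_zero s))]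
  rw [← Complex.norm_conj]
  congr 1
  simp only [map_add, map_one, map_mul, Complex.conj_ofReal, Complex.conj_I]
  ring

lemma cayley_sub_one (s : ℝ) : cayley s - 1 = s * (2 * Complex.I / (1 - s * Complex.I)) := by
  have := one_sub_mul_I_ne_zero s
  rw [cayley]
  field_simp
  ring

lemma continuous_cayley : Continuous cayley :=
  Continuous.div (by fun_prop) (by fun_prop) one_sub_mul_I_ne_zero

lemma cayley_injective : Function.Injective cayley := by
  intro s t h
  rw [cayley, cayley, div_eq_div_iff (one_sub_mul_I_ne_zero s) (one_sub_mul_I_ne_zero t)] at h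
  have : ((s - t : ℝ) : ℂ) * (2 * Complex.I) = 0 := by push_cast; linear_combination h
  simpa [sub_eq_zero, Complex.I_ne_zero] using this

lemma setOf_norm_eq_one_infinite : {z : ℂ | ‖z‖ = 1}.Infinite :=
  (Set.infinite_range_of_injective cayley_injective).mono (Set.range_subset_iff.mpr norm_cayley)

lemma le_of_continuousAt_of_forall_pos_le {β : Type*} [TopologicalSpace β] [Preorder β]
    [ClosedIciTopology β] {G : ℝ → β} {a : β} (hG : ContinuousAt G 0)
    (h : ∀ s > 0, a ≤ G s) : a ≤ G 0 :=
  ge_of_tendsto (hG.tendsto.mono_left nhdsWithin_le_nhds)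
    (eventually_nhdsWithin_of_forall (s := Set.Ioi 0) h)

lemma eq_zero_of_continuousAt_of_nonneg_mul {G : ℝ → ℂ} (hG : ContinuousAt G 0)
    (h : ∀ s : ℝ, 0 ≤ (s : ℂ) * G s) : G 0 = 0 := by
  have right : 0 ≤ G 0 := le_of_continuousAt_of_forall_pos_le hG fun s hs => by
    simpa [hs.ne'] using mul_nonneg (inv_nonneg.mpr (Complex.zero_le_real.mpr hs.le)) (h s)
  have left : G 0 ≤ 0 := by
    simpa using le_of_continuousAt_of_forall_pos_le (a := 0) (G := fun s => -G (-s))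
      (hG.comp_of_eq continuous_neg.continuousAt neg_zero).neg fun s hs => by
        simpa [hs.ne'] using mul_nonneg (inv_nonneg.mpr (Complex.zero_le_real.mpr hs.le)) (h (-s))
  exact le_antisymm left right

lemma nonneg_of_continuousAt_of_forall_norm_eq_one_ne {G : ℂ → ℂ} {α : ℂ} (hα : ‖α‖ = 1)
    (hG : ContinuousAt G α) (h : ∀ z, ‖z‖ = 1 → z ≠ α → 0 ≤ G z) : 0 ≤ G α := by
  have hcurve : ContinuousAt (fun s => α * cayley s) 0 :=
    (continuous_const.mul continuous_cayley).continuousAt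
  have hne : ∀ s > 0, α * cayley s ≠ α := fun s hs => by
    rw [Ne, ← sub_eq_zero, ← mul_sub_one, cayley_sub_one]
    simp [ne_zero_of_norm_eq_one hα, hs.ne', Complex.I_ne_zero, one_sub_mul_I_ne_zero]
  simpa [cayley_zero] using le_of_continuousAt_of_forall_pos_le (G := fun s => G (α * cayley s))
    (hG.comp_of_eq hcurve (by simp [cayley_zero]))
    fun s hs => h _ (by simp [norm_cayley, hα]) (hne s hs)

/-- Along the curve `s ↦ α * cayley s`, `z - α` is `s` times a continuous nonvanishing factor,
so the rest of the product is `≥ 0` for `s > 0` and `≤ 0` for `s < 0`, hence vanishes at `α`. -/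
lemma eval_eq_zero_of_nonneg_sub_mul {N : ℕ} {q : ℂ[X]} {α : ℂ} (hα : ‖α‖ = 1)
    (h : ∀ z : ℂ, ‖z‖ = 1 → 0 ≤ (z ^ N)⁻¹ * ((z - α) * q.eval z)) : q.eval α = 0 := by
  have hα0 := ne_zero_of_norm_eq_one hα
  set z : ℝ → ℂ := fun s => α * cayley s
  have hz0 : ∀ s, z s ≠ 0 := fun s => mul_ne_zero hα0 (ne_zero_of_norm_eq_one (norm_cayley s))
  have hG : Continuous fun s : ℝ =>
      2 * Complex.I / (1 - s * Complex.I) * α * (z s ^ N)⁻¹ * q.eval (z s) := by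
    have hz : Continuous z := continuous_const.mul continuous_cayley
    exact (((continuous_const.div (by fun_prop) one_sub_mul_I_ne_zero).mul continuous_const).mul
      ((hz.pow N).inv₀ fun s => pow_ne_zero N (hz0 s))).mul (q.continuous.comp hz)
  have := eq_zero_of_continuousAt_of_nonneg_mul hG.continuousAt fun s => by
    convert h (z s) (by simp [z, norm_cayley, hα]) using 1
    have : z s - α = α * (s * (2 * Complex.I / (1 - s * Complex.I))) := by
      rw [← cayley_sub_one]; simp only [z]; ring
    rw [this]; ring
  simpa [z, cayley_zero, hα0, Complex.I_ne_zero] using this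

lemma eval_map_star (p : ℂ[X]) (z : ℂ) :
    (p.map (starRingEnd ℂ)).eval z = star (p.eval (star z)) := by
  rw [eval_map, eval, Complex.star_def, hom_eval₂, RingHom.comp_id, Complex.conj_conj]

lemma eval_reflect_map_star {n : ℕ} {p : ℂ[X]} (hp : p.natDegree ≤ n) {z : ℂ} (hz : z ≠ 0) :
    (reflect n (p.map (starRingEnd ℂ))).eval z = z ^ n * star (p.eval (star z)⁻¹) := by
  let := invertibleOfNonzero (inv_ne_zero hz)
  have := eval₂_reflect_mul_pow (RingHom.id ℂ) z⁻¹ n (p.map (starRingEnd ℂ))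
    (by rwa [natDegree_map])
  rw [invOf_eq_inv, inv_inv, ← eval, ← eval, eval_map_star, star_inv₀] at this
  rw [← this, inv_pow, mul_comm, inv_mul_cancel_right₀ (pow_ne_zero n hz)]

lemma reflect_map_star_eq_self {n : ℕ} {p : ℂ[X]} (hp : p.natDegree ≤ 2 * n)
    (hreal : ∀ z : ℂ, ‖z‖ = 1 → IsSelfAdjoint ((z ^ n)⁻¹ * p.eval z)) :
    reflect (2 * n) (p.map (starRingEnd ℂ)) = p := by
  refine eq_of_infinite_eval_eq _ _ (setOf_norm_eq_one_infinite.mono fun z hz => ?_)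
  have hz0 := ne_zero_of_norm_eq_one hz
  have hreal := (hreal z hz).star_eq
  rw [star_mul', star_inv₀, star_pow, star_eq_inv_of_norm_eq_one hz, inv_pow, inv_inv] at hreal
  rw [Set.mem_ofPred_eq, eval_reflect_map_star hp hz0, star_eq_inv_of_norm_eq_one hz, inv_inv,
    pow_mul', sq, mul_assoc, hreal, mul_inv_cancel_left₀ (pow_ne_zero n hz0)]

lemma sub_mul_sub_inv_star {α z : ℂ} (hα : α ≠ 0) (hz : ‖z‖ = 1) :
    (z - α) * (z - (star α)⁻¹) = -(z / star α) * ((z - α) * star (z - α)) := by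
  have hz0 := ne_zero_of_norm_eq_one hz
  have hα' : star α ≠ 0 := star_ne_zero.mpr hα
  rw [star_sub, star_eq_inv_of_norm_eq_one hz]
  field_simp
  ring

lemma X_sub_C_mul_X_sub_C_inv_star_dvd {n : ℕ} {p : ℂ[X]} (hp : p.natDegree ≤ 2 * n)
    (hnn : ∀ z : ℂ, ‖z‖ = 1 → 0 ≤ (z ^ n)⁻¹ * p.eval z) {α : ℂ} (hα0 : α ≠ 0)
    (hα : p.IsRoot α) : (X - C α) * (X - C (star α)⁻¹) ∣ p := by
  by_cases hcirc : ‖α‖ = 1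
  · obtain ⟨q, rfl⟩ := dvd_iff_isRoot.mpr hα
    rw [star_eq_inv_of_norm_eq_one hcirc, inv_inv]
    refine mul_dvd_mul_left _ (dvd_iff_isRoot.mpr
      (eval_eq_zero_of_nonneg_sub_mul (N := n) hcirc fun z hz => ?_))
    simpa using hnn z hz
  · have hself := reflect_map_star_eq_self hp fun z hz => .of_nonneg (hnn z hz)
    have hβ : p.IsRoot (star α)⁻¹ := by
      rw [IsRoot, ← hself, eval_reflect_map_star hp (inv_ne_zero (star_ne_zero.mpr hα0)),
        star_inv₀, star_star, inv_inv, hα.eq_zero, star_zero, mul_zero]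
    have hne : α - (star α)⁻¹ ≠ 0 := fun h => hcirc <| by
      have h1 : α * star α = 1 := by
        nth_rewrite 1 [sub_eq_zero.mp h]
        exact inv_mul_cancel₀ (star_ne_zero.mpr hα0)
      rw [Complex.star_def, Complex.mul_conj'] at h1
      exact (pow_eq_one_iff_of_nonneg (norm_nonneg α) two_ne_zero).mp (by exact_mod_cast h1)
    exact (isCoprime_X_sub_C_of_isUnit_sub hne.isUnit).mul_dvd (dvd_iff_isRoot.mpr hα)
      (dvd_iff_isRoot.mpr hβ)

lemma nonneg_of_nonneg_sub_mul_star_sub_mul {α : ℂ} {g : ℂ → ℂ} (hg : ContinuousAt g α)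
    (h : ∀ z : ℂ, ‖z‖ = 1 → 0 ≤ (z - α) * star (z - α) * g z) {z : ℂ} (hz : ‖z‖ = 1) :
    0 ≤ g z := by
  have off : ∀ z : ℂ, ‖z‖ = 1 → z ≠ α → 0 ≤ g z := fun z hz hne => by
    have hpos : 0 < (z - α) * star (z - α) :=
      mul_star_self_pos (.of_ne_zero (sub_ne_zero.mpr hne))
    simpa only [inv_mul_cancel_left₀ hpos.ne'] using mul_nonneg (inv_nonneg.mpr hpos.le) (h z hz)
  by_cases hzα : z = α
  · subst hzα
    exact nonneg_of_continuousAt_of_forall_norm_eq_one_ne hz hg off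
  · exact off z hz hzα

lemma eval_X_mul_div_pow_succ (n : ℕ) (q : ℂ[X]) {z : ℂ} (hz : z ≠ 0) :
    (z ^ (n + 1))⁻¹ * (X * q).eval z = (z ^ n)⁻¹ * q.eval z := by
  rw [eval_mul, eval_X, pow_succ, mul_inv, mul_assoc, inv_mul_cancel_left₀ hz]

lemma eval_X_sub_C_mul_X_sub_C_inv_star_mul_div_pow_succ (n : ℕ) (q : ℂ[X]) {α z : ℂ}
    (hα : α ≠ 0) (hz : ‖z‖ = 1) :
    (z ^ (n + 1))⁻¹ * ((X - C α) * (X - C (star α)⁻¹) * q).eval z =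
      (z - α) * star (z - α) * ((z ^ n)⁻¹ * (C (-(star α)⁻¹) * q).eval z) := by
  have hz0 := ne_zero_of_norm_eq_one hz
  simp only [eval_mul, eval_sub, eval_X, eval_C]
  rw [sub_mul_sub_inv_star hα hz, pow_succ]
  field_simp

lemma exists_eq_mul_star_mul_of_nonneg {n : ℕ} {p : ℂ[X]} (hp : p.natDegree ≤ 2 * (n + 1))
    (hnn : ∀ z : ℂ, ‖z‖ = 1 → 0 ≤ (z ^ (n + 1))⁻¹ * p.eval z) :
    ∃ a q : ℂ[X], a.natDegree ≤ 1 ∧ q.natDegree ≤ 2 * n ∧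
      (∀ z : ℂ, ‖z‖ = 1 → 0 ≤ (z ^ n)⁻¹ * q.eval z) ∧
      ∀ z : ℂ, ‖z‖ = 1 →
        (z ^ (n + 1))⁻¹ * p.eval z = a.eval z * star (a.eval z) * ((z ^ n)⁻¹ * q.eval z) := by
  have hsymm : p.coeff 0 = star (p.coeff (2 * (n + 1))) := by
    have := congrArg (coeff · 0)
      (reflect_map_star_eq_self hp fun z hz => .of_nonneg (hnn z hz))
    simpa [coeff_reflect] using this.symm
  by_cases h0 : p.coeff 0 = 0
  · obtain ⟨q, rfl⟩ := X_dvd_iff.mpr h0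
    have hq : q.natDegree ≤ 2 * n := by
      refine natDegree_le_iff_coeff_eq_zero.mpr fun m hm => ?_
      rw [← coeff_X_mul]
      obtain rfl | hlt : m = 2 * n + 1 ∨ 2 * (n + 1) < m + 1 := by omega
      · simpa [h0, mul_add] using hsymm.symm
      · exact coeff_eq_zero_of_natDegree_lt (hp.trans_lt hlt)
    have hpq := fun z (hz : ‖z‖ = 1) => eval_X_mul_div_pow_succ n q (ne_zero_of_norm_eq_one hz)
    exact ⟨1, q, by simp, hq, fun z hz => hpq z hz ▸ hnn z hz, fun z hz => by
      rw [hpq z hz, eval_one, star_one, mul_one, one_mul]⟩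
  · have hdeg : 2 * (n + 1) ≤ p.natDegree :=
      le_natDegree_of_ne_zero fun h => h0 (by rw [hsymm, h, star_zero])
    obtain ⟨α, hα⟩ := Complex.exists_root
      (natDegree_pos_iff_degree_pos.mp (by omega : 0 < p.natDegree))
    have hα0 : α ≠ 0 := by
      rintro rfl
      exact h0 (by rwa [coeff_zero_eq_eval_zero])
    obtain ⟨q, rfl⟩ := X_sub_C_mul_X_sub_C_inv_star_dvd hp hnn hα0 hα
    have hq : (C (-(star α)⁻¹) * q).natDegree ≤ 2 * n := by
      have hmonic := (monic_X_sub_C α).mul (monic_X_sub_C (star α)⁻¹)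
      have hq0 : q ≠ 0 := by rintro rfl; simp at h0
      rw [hmonic.natDegree_mul' hq0, (monic_X_sub_C α).natDegree_mul (monic_X_sub_C _),
        natDegree_X_sub_C, natDegree_X_sub_C] at hp
      exact natDegree_C_mul_le _ _ |>.trans (by omega)
    have hpq := fun z (hz : ‖z‖ = 1) =>
      eval_X_sub_C_mul_X_sub_C_inv_star_mul_div_pow_succ n q hα0 hz
    have hcont : ContinuousAt (fun z => (z ^ n)⁻¹ * (C (-(star α)⁻¹) * q).eval z) α :=
      ((continuousAt_id.pow n).inv₀ (pow_ne_zero n hα0)).mul (Polynomial.continuousAt _)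
    refine ⟨X - C α, _, (natDegree_X_sub_C α).le, hq, fun z hz => ?_, fun z hz => ?_⟩
    · exact nonneg_of_nonneg_sub_mul_star_sub_mul hcont (fun z hz => hpq z hz ▸ hnn z hz) hz
    · simpa using hpq z hz

theorem exists_eq_mul_star_of_nonneg (n : ℕ) (p : ℂ[X]) (hp : p.natDegree ≤ 2 * n)
    (hnn : ∀ z : ℂ, ‖z‖ = 1 → 0 ≤ (z ^ n)⁻¹ * p.eval z) :
    ∃ h : ℂ[X], h.natDegree ≤ n ∧
      ∀ z : ℂ, ‖z‖ = 1 → (z ^ n)⁻¹ * p.eval z = h.eval z * star (h.eval z) := by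
  induction n generalizing p with
  | zero =>
    obtain ⟨b, hb⟩ := CStarAlgebra.nonneg_iff_eq_mul_star_self.mp (hnn 1 norm_one)
    rw [eq_C_of_natDegree_le_zero hp] at hb ⊢
    exact ⟨C b, natDegree_C b ▸ le_rfl, fun z _ => by simpa using hb⟩
  | succ n ih =>
    obtain ⟨a, q, ha, hq, hqnn, hpq⟩ := exists_eq_mul_star_mul_of_nonneg hp hnn
    obtain ⟨h, hdeg, hh⟩ := ih q hq hqnn
    refine ⟨a * h, natDegree_mul_le.trans (by omega), fun z hz => ?_⟩
    rw [hpq z hz, hh z hz, eval_mul, star_mul']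
    ring

noncomputable def laurentNumerator (N : ℕ) (c : ℤ → ℂ) : ℂ[X] :=
  ∑ k ∈ Finset.Icc (-(N : ℤ)) N, C (c k) * X ^ ((N : ℤ) - k).toNat

lemma natDegree_laurentNumerator_le (N : ℕ) (c : ℤ → ℂ) :
    (laurentNumerator N c).natDegree ≤ 2 * N :=
  natDegree_sum_le_of_forall_le _ _ fun k hk =>
    (natDegree_C_mul_X_pow_le _ _).trans (by rw [Finset.mem_Icc] at hk; omega)

lemma inv_pow_mul_eval_laurentNumerator (N : ℕ) (c : ℤ → ℂ) {z : ℂ} (hz : z ≠ 0) :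
    (z ^ N)⁻¹ * (laurentNumerator N c).eval z =
      ∑ k ∈ Finset.Icc (-(N : ℤ)) N, c k * z ^ (-k) := by
  rw [laurentNumerator, eval_finsetSum, Finset.mul_sum]
  refine Finset.sum_congr rfl fun k hk => ?_
  have hm : (((N : ℤ) - k).toNat : ℤ) = N - k := Int.toNat_of_nonneg (by simp at hk; omega)
  rw [eval_mul, eval_C, eval_pow, eval_X, ← zpow_natCast z (_ - k).toNat, hm, ← zpow_natCast,
    mul_left_comm, ← _root_.zpow_neg, ← zpow_add₀ hz]
  ring_nf

theorem sos_certificate_of_nonnegativity_general (N : ℕ) (c : ℤ → ℂ) :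
    (∀ z : ℂ, ‖z‖ = 1 →
        0 ≤ ∑ k ∈ Finset.Icc (-(N : ℤ)) (N : ℤ), c k * z ^ (-k)) ↔
    (∃ (r : ℕ) (h : Fin r → Polynomial ℂ),
        (∀ j, (h j).natDegree ≤ N) ∧
        ∀ z : ℂ, ‖z‖ = 1 →
          (∑ k ∈ Finset.Icc (-(N : ℤ)) (N : ℤ), c k * z ^ (-k)) =
            ∑ j, (h j).eval z * star ((h j).eval z)) := by
  have hf := fun z (hz : ‖z‖ = 1) =>
    (inv_pow_mul_eval_laurentNumerator N c (ne_zero_of_norm_eq_one hz)).symm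
  constructor
  · intro hnn
    obtain ⟨h, hdeg, hh⟩ := exists_eq_mul_star_of_nonneg N _ (natDegree_laurentNumerator_le N c)
      fun z hz => hf z hz ▸ hnn z hz
    exact ⟨1, fun _ => h, fun _ => hdeg, fun z hz => by rw [hf z hz, hh z hz, Fin.sum_univ_one]⟩
  · rintro ⟨r, h, -, hh⟩ z hz
    rw [hh z hz]
    exact Finset.sum_nonneg fun j _ => mul_star_self_nonneg _

/-- SOS certificate of nonnegativity for trigonometric polynomials.
A trigonometric polynomial `f(z) = ∑_{k=-N}^N c_k z^{-k}` with `c_{-k} = conj (c_k)`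
is nonnegative on the unit circle iff it is a sum of squares of complex
polynomials of degree at most `N`. -/
theorem sos_certificate_of_nonnegativity (N : ℕ) (c : ℤ → ℂ)
    (hsymm : ∀ k : ℤ, c (-k) = star (c k)) :
    (∀ z : ℂ, ‖z‖ = 1 →
        0 ≤ ∑ k ∈ Finset.Icc (-(N : ℤ)) (N : ℤ), c k * z ^ (-k)) ↔
    (∃ (r : ℕ) (h : Fin r → Polynomial ℂ),
        (∀ j, (h j).natDegree ≤ N) ∧
        ∀ z : ℂ, ‖z‖ = 1 →
          (∑ k ∈ Finset.Icc (-(N : ℤ)) (N : ℤ), c k * z ^ (-k)) =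
            ∑ j, (h j).eval z * star ((h j).eval z)) :=
  sos_certificate_of_nonnegativity_general N c
end

section
/- Let N ≥ 0 and let f(z) = ∑_{k=-N}^{N} c_k z^{-k} be a trigonometric polynomial of degree N. Then f is a sum of squares (there exist complex polynomials h_1, …, h_r of degree at most N with f(z) = ∑_j h_j(z)·conj(h_j(z)) on the unit circle) if and only if there exists a positive semidefinite Hermitian matrix Q ∈ ℂ^{(N+1)×(N+1)} that is a Gram matrix of f, i.e., f(z) = ψ(z)* Q ψ(z) for all z with |z| = 1, where ψ(z) = (1, z, …, z^N)ᵀ. -/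
/-!
A positive semidefinite Gram matrix factors as `Q = Bᴴ * B`, and then
`ψ* Q ψ = ∑ⱼ |(B ψ)ⱼ|²`, where `(B ψ)ⱼ` is the value at `z` of the polynomial whose coefficient
vector is the `j`-th row of `B`. Conversely, the coefficient rows of the `hⱼ` form a matrix `A`
with `Aᴴ * A` a positive semidefinite Gram matrix of `f`.
-/

open Matrix ComplexOrder Polynomial

theorem Matrix.star_dotProduct_conjTranspose_mul_self_mulVec {m n R : Type*} [Fintype m]
    [Fintype n] [CommSemiring R] [StarRing R] (A : Matrix m n R) (v : n → R) :
    star v ⬝ᵥ (Aᴴ * A) *ᵥ v = ∑ j, (A *ᵥ v) j * star ((A *ᵥ v) j) := by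
  rw [← mulVec_mulVec, dotProduct_mulVec, ← star_mulVec, dotProduct_comm]
  rfl

theorem Matrix.PosSemidef.exists_eq_conjTranspose_mul_self {n 𝕜 : Type*} [Fintype n] [RCLike 𝕜]
    {Q : Matrix n n 𝕜} (hQ : Q.PosSemidef) : ∃ B : Matrix n n 𝕜, Q = Bᴴ * B := by
  classical
  open scoped MatrixOrder in exact CStarAlgebra.nonneg_iff_eq_star_mul_self.mp hQ.nonneg

namespace Polynomial

variable {R : Type*} [CommSemiring R]

theorem eval_eq_coeff_dotProduct_powers {p : R[X]} {n : ℕ} (hp : p.natDegree < n) (z : R) :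
    p.eval z = (fun i : Fin n => p.coeff i) ⬝ᵥ fun i => z ^ (i : ℕ) := by
  rw [eval_eq_sum_range' hp, ← Fin.sum_univ_eq_sum_range]
  rfl

theorem natDegree_sum_fin_C_mul_X_pow_le {N : ℕ} (b : Fin (N + 1) → R) :
    (∑ i, C (b i) * X ^ (i : ℕ)).natDegree ≤ N :=
  natDegree_sum_le_of_forall_le _ _ fun i _ =>
    (natDegree_C_mul_X_pow_le _ _).trans (Nat.lt_succ_iff.mp i.isLt)

theorem eval_sum_fin_C_mul_X_pow {n : ℕ} (b : Fin n → R) (z : R) :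
    (∑ i, C (b i) * X ^ (i : ℕ)).eval z = b ⬝ᵥ fun i => z ^ (i : ℕ) := by
  simp only [eval_finsetSum, eval_C_mul, eval_X_pow]
  rfl

end Polynomial

theorem sos_iff_psd_gram_matrix_general (N : ℕ) (c : ℤ → ℂ) :
    (∃ (r : ℕ) (h : Fin r → Polynomial ℂ),
        (∀ j, (h j).natDegree ≤ N) ∧
        ∀ z : ℂ, ‖z‖ = 1 →
          (∑ k ∈ Finset.Icc (-(N : ℤ)) (N : ℤ), c k * z ^ (-k)) =
            ∑ j, (h j).eval z * star ((h j).eval z)) ↔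
    (∃ Q : Matrix (Fin (N + 1)) (Fin (N + 1)) ℂ, Q.PosSemidef ∧
        ∀ z : ℂ, ‖z‖ = 1 →
          (∑ k ∈ Finset.Icc (-(N : ℤ)) (N : ℤ), c k * z ^ (-k)) =
            star (fun i : Fin (N + 1) => z ^ (i : ℕ)) ⬝ᵥ
              Q.mulVec (fun i : Fin (N + 1) => z ^ (i : ℕ))) := by
  constructor
  · rintro ⟨r, h, hdeg, hf⟩
    let A : Matrix (Fin r) (Fin (N + 1)) ℂ := of fun j i => (h j).coeff i
    refine ⟨Aᴴ * A, posSemidef_conjTranspose_mul_self A, fun z hz => ?_⟩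
    simp only [hf z hz, star_dotProduct_conjTranspose_mul_self_mulVec,
      eval_eq_coeff_dotProduct_powers (Nat.lt_succ_of_le (hdeg _))]
    rfl
  · rintro ⟨Q, hQ, hf⟩
    obtain ⟨B, rfl⟩ := hQ.exists_eq_conjTranspose_mul_self
    refine ⟨N + 1, fun j => ∑ i, C (B j i) * X ^ (i : ℕ),
      fun j => natDegree_sum_fin_C_mul_X_pow_le _, fun z hz => ?_⟩
    simp only [hf z hz, star_dotProduct_conjTranspose_mul_self_mulVec, eval_sum_fin_C_mul_X_pow]
    rfl

/-- SOS iff existence of a PSD Gram matrix.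
A trigonometric polynomial `f(z) = ∑_{k=-N}^N c_k z^{-k}` is a sum of squares of
complex polynomials of degree at most `N` iff there exists a positive semidefinite
Hermitian matrix `Q` with `f(z) = ψ(z)* Q ψ(z)` on the unit circle, where
`ψ(z) = (1, z, …, z^N)ᵀ`. -/
theorem sos_iff_psd_gram_matrix (N : ℕ) (c : ℤ → ℂ)
    (hsymm : ∀ k : ℤ, c (-k) = star (c k)) :
    (∃ (r : ℕ) (h : Fin r → Polynomial ℂ),
        (∀ j, (h j).natDegree ≤ N) ∧
        ∀ z : ℂ, ‖z‖ = 1 →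
          (∑ k ∈ Finset.Icc (-(N : ℤ)) (N : ℤ), c k * z ^ (-k)) =
            ∑ j, (h j).eval z * star ((h j).eval z)) ↔
    (∃ Q : Matrix (Fin (N + 1)) (Fin (N + 1)) ℂ, Q.PosSemidef ∧
        ∀ z : ℂ, ‖z‖ = 1 →
          (∑ k ∈ Finset.Icc (-(N : ℤ)) (N : ℤ), c k * z ^ (-k)) =
            star (fun i : Fin (N + 1) => z ^ (i : ℕ)) ⬝ᵥ
              Q.mulVec (fun i : Fin (N + 1) => z ^ (i : ℕ))) :=
  sos_iff_psd_gram_matrix_general N c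
end

section
/- (Generalized Schur complement lemma.) Let A ∈ ℝ^{n×n} and C ∈ ℝ^{m×m} be real symmetric matrices, let B ∈ ℝ^{m×n}, and let G ∈ ℝ^{m×m} be the Moore–Penrose pseudoinverse of C (i.e., G satisfies CGC = C, GCG = G, (CG)ᵀ = CG, (GC)ᵀ = GC). Then the block matrix M = [[A, Bᵀ], [B, C]] is positive semidefinite if and only if the following three conditions hold: C is positive semidefinite, (I − C G) B = 0, and A − Bᵀ G B is positive semidefinite. -/
/-!
If `B = C * X` for some `X`, the unipotent congruence `L = [[1, 0], [X, 1]]` carries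
`[[A, Bᴴ], [B, C]]` to the block-diagonal matrix `diag(A - Xᴴ C X, C)`, and `CGC = C` gives
`Xᴴ C X = Bᴴ G B`. Such an `X` exists iff `C G B = B`. When the block matrix is positive
semidefinite this holds: for `C z = 0` the vector `(0, z)` is a null vector of the quadratic form,
hence lies in the kernel of the block matrix, so `Bᴴ z = 0`; thus every column of `1 - Gᴴ C`
(which `C` kills) is killed by `Bᴴ`.
-/

open Matrix
open scoped ComplexOrder

namespace Matrix

variable {m n R 𝕜 : Type*} [Fintype m] [Fintype n]

theorem posSemidef_fromBlocks_zero_iff [Ring R] [PartialOrder R] [StarRing R] [AddLeftMono R]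
    {A : Matrix n n R} {D : Matrix m m R} :
    (fromBlocks A 0 0 D).PosSemidef ↔ A.PosSemidef ∧ D.PosSemidef := by
  refine ⟨fun h ↦ ⟨h.submatrix Sum.inl, h.submatrix Sum.inr⟩, fun ⟨hA, hD⟩ ↦ ?_⟩
  refine .of_dotProduct_mulVec_nonneg
    (isHermitian_fromBlocks_iff.mpr ⟨hA.1, by simp, by simp, hD.1⟩) fun x ↦ ?_
  rw [← Sum.elim_comp_inl_inr x]
  simp only [fromBlocks_mulVec, zero_mulVec, add_zero, zero_add, Function.star_sumElim,
    sumElim_dotProduct_sumElim, Sum.elim_comp_inl, Sum.elim_comp_inr]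
  exact add_nonneg (hA.dotProduct_mulVec_nonneg _) (hD.dotProduct_mulVec_nonneg _)

theorem PosSemidef.conjTranspose_mulVec_eq_zero_of_mulVec_eq_zero [RCLike 𝕜]
    {A : Matrix n n 𝕜} {B : Matrix m n 𝕜} {C : Matrix m m 𝕜}
    (h : (fromBlocks A Bᴴ B C).PosSemidef) {z : m → 𝕜} (hz : C *ᵥ z = 0) : Bᴴ *ᵥ z = 0 := by
  have hv : fromBlocks A Bᴴ B C *ᵥ Sum.elim 0 z = 0 :=
    (h.dotProduct_mulVec_zero_iff _).mp (by simp [fromBlocks_mulVec, hz, Function.star_sumElim])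
  simpa [fromBlocks_mulVec] using congrArg (· ∘ Sum.inl) hv

omit [Fintype n] in
theorem mul_mul_eq_of_conjTranspose_mulVec_eq_zero [RCLike 𝕜] [DecidableEq m]
    {B : Matrix m n 𝕜} {C G : Matrix m m 𝕜} (hC : C.IsHermitian) (hG : C * G * C = C)
    (hB : ∀ z, C *ᵥ z = 0 → Bᴴ *ᵥ z = 0) : C * G * B = B := by
  have hN : C * (1 - Gᴴ * C) = 0 := by
    simpa [conjTranspose_mul, hC.eq, Matrix.mul_assoc, mul_sub, sub_eq_zero, eq_comm]
      using congrArg conjTranspose hG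
  have hBN : Bᴴ * (1 - Gᴴ * C) = 0 :=
    mulVec_injective <| funext fun v ↦ by
      simpa [← mulVec_mulVec] using hB _ (by rw [mulVec_mulVec, hN, zero_mulVec])
  simpa [conjTranspose_mul, hC.eq, Matrix.sub_mul, sub_eq_zero, eq_comm]
    using congrArg conjTranspose hBN

variable [DecidableEq m] [DecidableEq n]

theorem fromBlocks_eq_conjTranspose_mul_fromBlocks_zero_mul [Ring R] [StarRing R]
    (A : Matrix n n R) (C : Matrix m m R) (X : Matrix m n R) (hC : C.IsHermitian) :
    fromBlocks A (C * X)ᴴ (C * X) C =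
      (fromBlocks 1 0 X 1)ᴴ * fromBlocks (A - Xᴴ * C * X) 0 0 C * fromBlocks 1 0 X 1 := by
  rw [fromBlocks_conjTranspose, fromBlocks_multiply, fromBlocks_multiply]
  simp [conjTranspose_mul, hC.eq, Matrix.mul_assoc]

theorem isUnit_fromBlocks_one_zero_one [CommRing R] (X : Matrix m n R) :
    IsUnit (fromBlocks 1 0 X 1 : Matrix (n ⊕ m) (n ⊕ m) R) := by
  simp [isUnit_iff_isUnit_det]

theorem posSemidef_fromBlocks_iff_of_mul_mul_eq [RCLike 𝕜]
    {A : Matrix n n 𝕜} {B : Matrix m n 𝕜} {C G : Matrix m m 𝕜}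
    (hC : C.IsHermitian) (hG : C * G * C = C) (hB : C * G * B = B) :
    (fromBlocks A Bᴴ B C).PosSemidef ↔ (A - Bᴴ * G * B).PosSemidef ∧ C.PosSemidef := by
  obtain ⟨X, rfl⟩ : ∃ X, B = C * X := ⟨G * B, by rw [← Matrix.mul_assoc, hB]⟩
  have hS : (C * X)ᴴ * G * (C * X) = Xᴴ * C * X := by
    simpa [conjTranspose_mul, hC.eq, Matrix.mul_assoc] using congrArg (Xᴴ * · * X) hG
  rw [hS, fromBlocks_eq_conjTranspose_mul_fromBlocks_zero_mul A C X hC, ← star_eq_conjTranspose,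
    (isUnit_fromBlocks_one_zero_one X).posSemidef_star_left_conjugate_iff,
    posSemidef_fromBlocks_zero_iff]

theorem posSemidef_fromBlocks_iff_of_mul_mul_eq_self [RCLike 𝕜]
    {A : Matrix n n 𝕜} {B : Matrix m n 𝕜} {C G : Matrix m m 𝕜} (hG : C * G * C = C) :
    (fromBlocks A Bᴴ B C).PosSemidef ↔
      C.PosSemidef ∧ (1 - C * G) * B = 0 ∧ (A - Bᴴ * G * B).PosSemidef := by
  constructor
  · intro h
    have hC : C.PosSemidef := h.submatrix Sum.inr
    have hB : C * G * B = B := mul_mul_eq_of_conjTranspose_mulVec_eq_zero hC.1 hG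
      fun _ ↦ h.conjTranspose_mulVec_eq_zero_of_mulVec_eq_zero
    exact ⟨hC, by rw [Matrix.sub_mul, Matrix.one_mul, hB, sub_self],
      ((posSemidef_fromBlocks_iff_of_mul_mul_eq hC.1 hG hB).mp h).1⟩
  · rintro ⟨hC, hB, hS⟩
    rw [Matrix.sub_mul, Matrix.one_mul, sub_eq_zero, eq_comm] at hB
    exact (posSemidef_fromBlocks_iff_of_mul_mul_eq hC.1 hG hB).mpr ⟨hS, hC⟩

end Matrix

theorem generalized_schur_complement_general (n m : ℕ)
    (A : Matrix (Fin n) (Fin n) ℝ) (C G : Matrix (Fin m) (Fin m) ℝ)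
    (B : Matrix (Fin m) (Fin n) ℝ)
    (hG1 : C * G * C = C) :
    (Matrix.fromBlocks A Bᵀ B C).PosSemidef ↔
      (C.PosSemidef ∧ (1 - C * G) * B = 0 ∧ (A - Bᵀ * G * B).PosSemidef) := by
  simpa only [conjTranspose_eq_transpose_of_trivial] using
    posSemidef_fromBlocks_iff_of_mul_mul_eq_self (A := A) (B := B) hG1

/-- Generalized Schur complement lemma.
Let `A`, `C` be real symmetric matrices, `B` a real matrix, and `G` the
Moore–Penrose pseudoinverse of `C`. Then the block matrix `[[A, Bᵀ], [B, C]]`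
is positive semidefinite iff `C ⪰ 0`, `(I - C G) B = 0`, and `A - Bᵀ G B ⪰ 0`. -/
theorem generalized_schur_complement (n m : ℕ)
    (A : Matrix (Fin n) (Fin n) ℝ) (C G : Matrix (Fin m) (Fin m) ℝ)
    (B : Matrix (Fin m) (Fin n) ℝ)
    (hA : Aᵀ = A) (hC : Cᵀ = C)
    (hG1 : C * G * C = C) (hG2 : G * C * G = G)
    (hG3 : (C * G)ᵀ = C * G) (hG4 : (G * C)ᵀ = G * C) :
    (Matrix.fromBlocks A Bᵀ B C).PosSemidef ↔
      (C.PosSemidef ∧ (1 - C * G) * B = 0 ∧ (A - Bᵀ * G * B).PosSemidef) :=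
  generalized_schur_complement_general n m A C G B hG1
end

section
/- Let X ∈ ℝ^{m×m} and L ∈ ℝ^{n×n} be real symmetric matrices, let F ∈ ℝ^{n×m}, and let G be the Moore–Penrose pseudoinverse of L. If the block matrix [[X, Fᵀ], [F, L]] is positive semidefinite, then: (i) X − Fᵀ G F is positive semidefinite; (ii) tr(X − Fᵀ G F) ≥ 0; and (iii) tr(X − Fᵀ G F) = 0 if and only if X = Fᵀ G F. -/
open Matrix

/-!
Since `L` is symmetric, `Gᵀ` is again a Moore–Penrose inverse of `L`, so `G` is symmetric by
uniqueness of the Moore–Penrose inverse. Conjugating the block matrix by `[1; -G F]` and using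
`G L G = G` gives `X - Fᵀ G F`, which is therefore positive semidefinite; a positive semidefinite
matrix has nonnegative trace, and zero trace only if it vanishes.
-/

structure IsMoorePenroseInverse {R : Type*} [Mul R] [Star R] (a g : R) : Prop where
  mul_inv_mul : a * g * a = a
  inv_mul_inv : g * a * g = g
  isSelfAdjoint_mul_inv : IsSelfAdjoint (a * g)
  isSelfAdjoint_inv_mul : IsSelfAdjoint (g * a)

namespace IsMoorePenroseInverse

variable {R : Type*} [Semigroup R] [StarMul R] {a g h : R}

protected theorem star (hg : IsMoorePenroseInverse a g) :
    IsMoorePenroseInverse (star a) (star g) where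
  mul_inv_mul := by rw [← star_mul, ← star_mul, ← mul_assoc, hg.mul_inv_mul]
  inv_mul_inv := by rw [← star_mul, ← star_mul, ← mul_assoc, hg.inv_mul_inv]
  isSelfAdjoint_mul_inv := by
    rw [← star_mul, IsSelfAdjoint.star_iff]; exact hg.isSelfAdjoint_inv_mul
  isSelfAdjoint_inv_mul := by
    rw [← star_mul, IsSelfAdjoint.star_iff]; exact hg.isSelfAdjoint_mul_inv

/-- Penrose's argument: `a * g` and `g * a` are determined by `a`, hence so is `g = g * a * g`. -/
theorem unique (hg : IsMoorePenroseInverse a g) (hh : IsMoorePenroseInverse a h) : g = h := by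
  have hag : a * g = a * h :=
    calc a * g = star (a * g) := hg.isSelfAdjoint_mul_inv.star_eq.symm
      _ = star (a * h * (a * g)) := by rw [← mul_assoc, hh.mul_inv_mul]
      _ = a * g * (a * h) := by
        rw [star_mul, hg.isSelfAdjoint_mul_inv.star_eq, hh.isSelfAdjoint_mul_inv.star_eq]
      _ = a * h := by rw [← mul_assoc, hg.mul_inv_mul]
  have hga : g * a = h * a :=
    calc g * a = star (g * a) := hg.isSelfAdjoint_inv_mul.star_eq.symm
      _ = star (g * a * (h * a)) := by
        rw [← mul_assoc, mul_assoc g a h, mul_assoc g, hh.mul_inv_mul]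
      _ = h * a * (g * a) := by
        rw [star_mul, hg.isSelfAdjoint_inv_mul.star_eq, hh.isSelfAdjoint_inv_mul.star_eq]
      _ = h * a := by rw [← mul_assoc, mul_assoc h a g, mul_assoc h, hg.mul_inv_mul]
  calc g = g * a * g := hg.inv_mul_inv.symm
    _ = h * a * h := by rw [hga, mul_assoc, hag, ← mul_assoc]
    _ = h := hh.inv_mul_inv

theorem isSelfAdjoint (hg : IsMoorePenroseInverse a g) (ha : IsSelfAdjoint a) :
    IsSelfAdjoint g := by
  have := hg.star
  rw [ha.star_eq] at this
  exact this.unique hg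

end IsMoorePenroseInverse

namespace Matrix

variable {m n R : Type*} [Fintype m] [Fintype n] [DecidableEq m]
  [Ring R] [StarRing R]

theorem conjTranspose_fromRows_mul_fromBlocks_mul_fromRows {A : Matrix m m R}
    {B : Matrix n m R} {D G : Matrix n n R} (hG : G.IsHermitian) (hGDG : G * D * G = G) :
    (fromRows (1 : Matrix m m R) (-(G * B)))ᴴ * fromBlocks A Bᴴ B D *
      fromRows (1 : Matrix m m R) (-(G * B)) = A - Bᴴ * G * B := by
  have hGB : (G * B)ᴴ = Bᴴ * G := by rw [conjTranspose_mul, hG.eq]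
  have hGDGB : G * (D * (G * B)) = G * B := by simp only [← Matrix.mul_assoc, hGDG]
  rw [conjTranspose_fromRows_eq_fromCols_conjTranspose, Matrix.mul_assoc,
    fromBlocks_mul_fromRows, fromCols_mul_fromRows, conjTranspose_neg, hGB]
  simp only [conjTranspose_one, Matrix.one_mul, Matrix.mul_one, Matrix.neg_mul,
    Matrix.mul_neg, Matrix.mul_add, neg_neg, Matrix.mul_assoc, hGDGB]
  abel

theorem PosSemidef.schur_complement_of_fromBlocks [PartialOrder R] {A : Matrix m m R}
    {B : Matrix n m R} {D G : Matrix n n R} (hG : G.IsHermitian) (hGDG : G * D * G = G)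
    (h : (fromBlocks A Bᴴ B D).PosSemidef) : (A - Bᴴ * G * B).PosSemidef := by
  have := h.conjTranspose_mul_mul_same (fromRows (1 : Matrix m m R) (-(G * B)))
  rwa [conjTranspose_fromRows_mul_fromBlocks_mul_fromRows hG hGDG] at this

end Matrix

theorem trace_inequality_of_block_posSemidef_general (n m : ℕ)
    (X : Matrix (Fin m) (Fin m) ℝ) (L G : Matrix (Fin n) (Fin n) ℝ)
    (F : Matrix (Fin n) (Fin m) ℝ)
    (hL : Lᵀ = L)
    (hG1 : L * G * L = L) (hG2 : G * L * G = G)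
    (hG3 : (L * G)ᵀ = L * G) (hG4 : (G * L)ᵀ = G * L)
    (hPSD : (Matrix.fromBlocks X Fᵀ F L).PosSemidef) :
    (X - Fᵀ * G * F).PosSemidef ∧
      0 ≤ (X - Fᵀ * G * F).trace ∧
      ((X - Fᵀ * G * F).trace = 0 ↔ X = Fᵀ * G * F) := by
  have hpinv : IsMoorePenroseInverse L G := ⟨hG1, hG2, hG3, hG4⟩
  have hGsymm : G.IsHermitian := hpinv.isSelfAdjoint hL
  have hSchur : (X - Fᵀ * G * F).PosSemidef := by
    rw [← conjTranspose_eq_transpose_of_trivial] at hPSD ⊢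
    exact hPSD.schur_complement_of_fromBlocks hGsymm hG2
  exact ⟨hSchur, hSchur.trace_nonneg, hSchur.trace_eq_zero_iff.trans sub_eq_zero⟩

/-- If the block matrix `[[X, Fᵀ], [F, L]]` is positive
semidefinite, where `L` has Moore–Penrose pseudoinverse `G`, then
`X - Fᵀ G F ⪰ 0`, `tr(X - Fᵀ G F) ≥ 0`, and `tr(X - Fᵀ G F) = 0` iff
`X = Fᵀ G F`. -/
theorem trace_inequality_of_block_posSemidef (n m : ℕ)
    (X : Matrix (Fin m) (Fin m) ℝ) (L G : Matrix (Fin n) (Fin n) ℝ)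
    (F : Matrix (Fin n) (Fin m) ℝ)
    (hX : Xᵀ = X) (hL : Lᵀ = L)
    (hG1 : L * G * L = L) (hG2 : G * L * G = G)
    (hG3 : (L * G)ᵀ = L * G) (hG4 : (G * L)ᵀ = G * L)
    (hPSD : (Matrix.fromBlocks X Fᵀ F L).PosSemidef) :
    (X - Fᵀ * G * F).PosSemidef ∧
      0 ≤ (X - Fᵀ * G * F).trace ∧
      ((X - Fᵀ * G * F).trace = 0 ↔ X = Fᵀ * G * F) :=
  trace_inequality_of_block_posSemidef_general n m X L G F hL hG1 hG2 hG3 hG4 hPSD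
end
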